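/- arXiv:1312.7493 — 8 statements merged into one kernel-verified Lean document; each statement's English description precedes it below -/
import Mathlib

section
/- Let B be an additive category and K(B) the homotopy category of cochain complexes over B. Suppose a complex M = (M^i) in K(B) is a retract (in K(B)) of a complex M'[0] concentrated in degree 0, for some object M' of B. Then M is also a retract of the complex M^0[0] (the zeroth term of M placed in degree 0) in K(B). -/
open CategoryTheory CategoryTheory.Limits

universe v u

/-- `X` is a retract of `Y`: the identity of `X` factors through `Y`. -/
def IsRetract {D : Type*} [Category D] (X Y : D) : Prop :=
  ∃ (i : X ⟶ Y) (r : Y ⟶ X), i ≫ r = 𝟙 X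

/-- Lemma 1.1.1: if a complex `M = (M^i)` is a retract in `K(B)` of a complex `M'[0]`
concentrated in degree `0` (for some object `M'` of the additive category `B`), then
`M` is also a retract of `M^0[0]` in `K(B)`. -/
theorem retract_of_degree_zero_term (B : Type u) [Category.{v} B] [Preadditive B]
    [HasZeroObject B] [HasFiniteBiproducts B]
    (M : CochainComplex B ℤ) (M' : B)
    (h : IsRetract ((HomotopyCategory.quotient B (ComplexShape.up ℤ)).obj M)
      ((HomotopyCategory.quotient B (ComplexShape.up ℤ)).obj
        ((HomologicalComplex.single B (ComplexShape.up ℤ) 0).obj M'))) :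
    IsRetract ((HomotopyCategory.quotient B (ComplexShape.up ℤ)).obj M)
      ((HomotopyCategory.quotient B (ComplexShape.up ℤ)).obj
        ((HomologicalComplex.single B (ComplexShape.up ℤ) 0).obj (M.X 0))) := by
  set S := HomologicalComplex.single B (ComplexShape.up ℤ) 0 with hS
  set e := HomologicalComplex.singleObjXSelf (ComplexShape.up ℤ) 0 M' with he
  obtain ⟨i, r, hir⟩ := h
  obtain ⟨I, rfl⟩ := (HomotopyCategory.quotient B (ComplexShape.up ℤ)).map_surjective i
  obtain ⟨R, rfl⟩ := (HomotopyCategory.quotient B (ComplexShape.up ℤ)).map_surjective r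
  set φ : M' ⟶ M.X 0 := e.inv ≫ R.f 0
  set ψ : M.X 0 ⟶ M' := I.f 0 ≫ e.hom
  have key : S.map φ ≫ S.map ψ = R ≫ I := by
    rw [← S.map_comp]
    apply HomologicalComplex.hom_ext
    intro n
    by_cases hn : n = 0
    · subst hn
      simp [S, e, HomologicalComplex.single_map_f_self, φ, ψ]
    · exact (HomologicalComplex.isZero_single_obj_X (ComplexShape.up ℤ) 0 M' n hn).eq_of_src _ _
  refine ⟨(HomotopyCategory.quotient B (ComplexShape.up ℤ)).map (I ≫ S.map φ),
    (HomotopyCategory.quotient B (ComplexShape.up ℤ)).map (S.map ψ ≫ R), ?_⟩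
  rw [← Functor.map_comp]
  have : I ≫ S.map φ ≫ S.map ψ ≫ R = I ≫ (R ≫ I) ≫ R := by
    rw [← key]; simp
  rw [Category.assoc, this]
  simp only [Functor.map_comp]
  rw [show (HomotopyCategory.quotient B (ComplexShape.up ℤ)).map I ≫ ((HomotopyCategory.quotient B (ComplexShape.up ℤ)).map R ≫ (HomotopyCategory.quotient B (ComplexShape.up ℤ)).map I) ≫ (HomotopyCategory.quotient B (ComplexShape.up ℤ)).map R = ((HomotopyCategory.quotient B (ComplexShape.up ℤ)).map I ≫ (HomotopyCategory.quotient B (ComplexShape.up ℤ)).map R) ≫ ((HomotopyCategory.quotient B (ComplexShape.up ℤ)).map I ≫ (HomotopyCategory.quotient B (ComplexShape.up ℤ)).map R) by simp]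
  rw [hir]; simp
end

section
/- Let C be a triangulated category endowed with a weight structure w, let M be an object of C, and let (0 = Y_l → Y_{l+1} → ⋯ → Y_m = M) be a bounded Postnikov tower for M, i.e., a sequence of morphisms together with distinguished triangles Y_{i−1} → Y_i → M_i → Y_{i−1}[1] for l < i ≤ m. If M_i ∈ C_{w=i} for every i with l < i ≤ m, then the tower is a weight Postnikov tower: for every such i one has Y_i ∈ C_{w≤i} and the cone of the composed morphism Y_i → M belongs to C_{w≥i+1}. -/
open CategoryTheory CategoryTheory.Limits CategoryTheory.Pretriangulated CategoryTheory.Category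
open scoped ZeroObject

universe w v u

/-- A weight structure on a triangulated category `C`. -/
structure WeightStructure (C : Type u) [Category.{v} C] [Preadditive C] [HasZeroObject C]
    [HasShift C ℤ] [∀ n : ℤ, (shiftFunctor C n).Additive] [Pretriangulated C] where
  /-- the class `C_{w≤0}` -/
  LE : Set C
  /-- the class `C_{w≥0}` -/
  GE : Set C
  le_retract : ∀ ⦃X Y : C⦄, IsRetract X Y → Y ∈ LE → X ∈ LE
  ge_retract : ∀ ⦃X Y : C⦄, IsRetract X Y → Y ∈ GE → X ∈ GE
  le_shift : ∀ X : C, X ∈ LE → X⟦(-1 : ℤ)⟧ ∈ LE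
  ge_shift : ∀ X : C, X ∈ GE → X⟦(1 : ℤ)⟧ ∈ GE
  orthogonal : ∀ ⦃X Y : C⦄, X ∈ LE → Y ∈ GE → ∀ f : X ⟶ Y⟦(1 : ℤ)⟧, f = 0
  exists_decomp : ∀ M : C, ∃ (B A : C) (f : B ⟶ M) (g : M ⟶ A) (h : A ⟶ B⟦(1 : ℤ)⟧),
    B ∈ LE ∧ A⟦(-1 : ℤ)⟧ ∈ GE ∧ Triangle.mk f g h ∈ distTriang C

namespace WeightStructure

variable {C : Type u} [Category.{v} C] [Preadditive C] [HasZeroObject C]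
  [HasShift C ℤ] [∀ n : ℤ, (shiftFunctor C n).Additive] [Pretriangulated C]

/-- the class `C_{w≤i} = C_{w≤0}[i]` -/
def leSet (w : WeightStructure C) (i : ℤ) : Set C := {X : C | X⟦-i⟧ ∈ w.LE}

/-- the class `C_{w≥i} = C_{w≥0}[i]` -/
def geSet (w : WeightStructure C) (i : ℤ) : Set C := {X : C | X⟦-i⟧ ∈ w.GE}

/-- the class `C_{w=i} = C_{w≤i} ∩ C_{w≥i}` -/
def eqSet (w : WeightStructure C) (i : ℤ) : Set C := w.leSet i ∩ w.geSet i

end WeightStructure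

variable {C : Type u} [Category.{v} C] [Preadditive C] [HasZeroObject C]
  [HasShift C ℤ] [∀ n : ℤ, (shiftFunctor C n).Additive] [Pretriangulated C]

/-!
`Y_i ∈ C_{w≤i}` follows by induction up the tower, since `C_{w≤i}` is closed under extensions
and contains `C_{w≤i-1}`. For a cone `Z` of `Y_i → M` it suffices that `Hom(P, Z) = 0` for all
`P ∈ C_{w≤i}`: the weight decomposition `B → Z → A` then has zero first map, so `Z` is a retract
of `A ∈ C_{w≥i+1}`. For `j > i` orthogonality gives `Hom(P, M_j) = 0`, so each `Y_{j-1} → Y_j`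
induces a surjection on `Hom(P, -)` and an injection on `Hom(P, -[1])`. Composing down the tower,
so does `Y_i → M`, and the long exact sequence of its cone forces `Hom(P, Z) = 0`.
-/

lemma IsRetract.of_iso {D : Type*} [Category D] {X Y : D} (e : X ≅ Y) : IsRetract X Y :=
  ⟨e.hom, e.inv, e.hom_inv_id⟩

lemma IsRetract.map {D E : Type*} [Category D] [Category E] (F : D ⥤ E) {X Y : D}
    (h : IsRetract X Y) : IsRetract (F.obj X) (F.obj Y) := by
  obtain ⟨i, r, hir⟩ := h
  exact ⟨F.map i, F.map r, by rw [← F.map_comp, hir, F.map_id]⟩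

section Triangles

variable {T : Triangle C}

lemma isRetract_obj₁_of_mor₂_eq_zero (hT : T ∈ distTriang C) (h : T.mor₂ = 0) :
    IsRetract T.obj₂ T.obj₁ := by
  obtain ⟨r, hr⟩ := Triangle.coyoneda_exact₂ T hT (𝟙 T.obj₂) (by simp [h])
  exact ⟨r, T.mor₁, hr.symm⟩

lemma isRetract_obj₃_of_mor₁_eq_zero (hT : T ∈ distTriang C) (h : T.mor₁ = 0) :
    IsRetract T.obj₂ T.obj₃ := by
  obtain ⟨s, hs⟩ := Triangle.yoneda_exact₂ T hT (𝟙 T.obj₂) (by simp [h])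
  exact ⟨T.mor₂, s, hs.symm⟩

lemma hom_obj₃_eq_zero_of_distTriang (hT : T ∈ distTriang C) {P : C}
    (hsurj : ∀ h : P ⟶ T.obj₂, ∃ k, k ≫ T.mor₁ = h)
    (hinj : ∀ h : P ⟶ T.obj₁⟦(1 : ℤ)⟧, h ≫ T.mor₁⟦(1 : ℤ)⟧' = 0 → h = 0) (f : P ⟶ T.obj₃) :
    f = 0 := by
  have hf : f ≫ T.mor₃ = 0 := hinj _ (by rw [assoc, comp_distTriang_mor_zero₃₁ T hT, comp_zero])
  obtain ⟨k, rfl⟩ := Triangle.coyoneda_exact₃ T hT f hf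
  obtain ⟨k', rfl⟩ := hsurj k
  rw [assoc, comp_distTriang_mor_zero₁₂ T hT, comp_zero]

end Triangles

namespace WeightStructure

variable (w : WeightStructure C)

lemma mem_leSet_of_isRetract {X Y : C} {i : ℤ} (h : IsRetract X Y) (hY : Y ∈ w.leSet i) :
    X ∈ w.leSet i :=
  w.le_retract (h.map (shiftFunctor C (-i))) hY

lemma mem_geSet_of_isRetract {X Y : C} {i : ℤ} (h : IsRetract X Y) (hY : Y ∈ w.geSet i) :
    X ∈ w.geSet i :=
  w.ge_retract (h.map (shiftFunctor C (-i))) hY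

lemma shift_mem_leSet {X : C} {a : ℤ} (hX : X ∈ w.leSet a) (n b : ℤ) (h : a + n = b) :
    X⟦n⟧ ∈ w.leSet b :=
  w.le_retract (.of_iso ((shiftFunctorAdd' C n (-b) (-a) (by omega)).app X).symm) hX

lemma shift_mem_geSet {X : C} {a : ℤ} (hX : X ∈ w.geSet a) (n b : ℤ) (h : a + n = b) :
    X⟦n⟧ ∈ w.geSet b :=
  w.ge_retract (.of_iso ((shiftFunctorAdd' C n (-b) (-a) (by omega)).app X).symm) hX

lemma leSet_monotone : Monotone w.leSet :=
  monotone_int_of_le_succ fun n X hX =>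
    w.le_retract (.of_iso ((shiftFunctorAdd' C (-n) (-1) (-(n + 1)) (by omega)).app X))
      (w.le_shift _ hX)

lemma geSet_antitone : Antitone w.geSet :=
  antitone_int_of_succ_le fun n X hX =>
    w.ge_retract (.of_iso ((shiftFunctorAdd' C (-(n + 1)) 1 (-n) (by omega)).app X))
      (w.ge_shift _ hX)

lemma mem_leSet_of_isZero {X : C} (hX : IsZero X) (i : ℤ) : X ∈ w.leSet i := by
  obtain ⟨B, -, -, -, -, hB, -⟩ := w.exists_decomp X
  exact w.le_retract ⟨0, 0, ((shiftFunctor C (-i)).map_isZero hX).eq_of_src _ _⟩ hB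

lemma hom_eq_zero_of_mem_LE_of_mem_geSet_one {P A : C} (hP : P ∈ w.LE) (hA : A ∈ w.geSet 1)
    (f : P ⟶ A) : f = 0 := by
  let e : A⟦(-1 : ℤ)⟧⟦(1 : ℤ)⟧ ≅ A := (shiftFunctorCompIsoId C (-1) 1 (by omega)).app A
  rw [← Preadditive.IsIso.comp_right_eq_zero f e.inv]
  exact w.orthogonal hP hA _

lemma hom_eq_zero_of_mem_leSet_of_mem_geSet {X Q : C} {i j : ℤ} (hX : X ∈ w.leSet i)
    (hQ : Q ∈ w.geSet j) (hij : i < j) (f : X ⟶ Q) : f = 0 := by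
  have hQ' : Q⟦-i⟧ ∈ w.geSet 1 := w.shift_mem_geSet (w.geSet_antitone hij hQ) (-i) 1 (by omega)
  rw [← Functor.map_eq_zero_iff (shiftFunctor C (-i))]
  exact w.hom_eq_zero_of_mem_LE_of_mem_geSet_one hX hQ' _

lemma mem_LE_of_distTriang {T : Triangle C} (hT : T ∈ distTriang C) (h₁ : T.obj₁ ∈ w.LE)
    (h₃ : T.obj₃ ∈ w.LE) : T.obj₂ ∈ w.LE := by
  obtain ⟨B, A, f, g, h, hB, hA, hBA⟩ := w.exists_decomp T.obj₂
  have hg : g = 0 := by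
    obtain ⟨v, rfl⟩ := Triangle.yoneda_exact₂ T hT g
      (w.hom_eq_zero_of_mem_LE_of_mem_geSet_one h₁ hA _)
    rw [w.hom_eq_zero_of_mem_LE_of_mem_geSet_one h₃ hA v, comp_zero]
  exact w.le_retract (isRetract_obj₁_of_mor₂_eq_zero (T := Triangle.mk f g h) hBA hg) hB

lemma mem_leSet_of_distTriang {T : Triangle C} (hT : T ∈ distTriang C) {i : ℤ}
    (h₁ : T.obj₁ ∈ w.leSet i) (h₃ : T.obj₃ ∈ w.leSet i) : T.obj₂ ∈ w.leSet i :=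
  w.mem_LE_of_distTriang (Triangle.shift_distinguished T hT (-i)) h₁ h₃

lemma mem_geSet_one_of_forall_hom_eq_zero {Z : C} (hZ : ∀ P ∈ w.LE, ∀ f : P ⟶ Z, f = 0) :
    Z ∈ w.geSet 1 := by
  obtain ⟨B, A, f, g, h, hB, hA, hBA⟩ := w.exists_decomp Z
  exact w.mem_geSet_of_isRetract (isRetract_obj₃_of_mor₁_eq_zero hBA (hZ B hB f)) hA

lemma mem_geSet_of_forall_hom_eq_zero {Z : C} {i : ℤ}
    (hZ : ∀ P ∈ w.leSet i, ∀ f : P ⟶ Z, f = 0) : Z ∈ w.geSet (i + 1) := by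
  let e : Z⟦-i⟧⟦i⟧ ≅ Z := (shiftFunctorCompIsoId C (-i) i (by omega)).app Z
  have hZi : Z⟦-i⟧ ∈ w.geSet 1 := w.mem_geSet_one_of_forall_hom_eq_zero fun P hP f => by
    have hPi : P⟦i⟧ ∈ w.leSet i :=
      w.le_retract (.of_iso ((shiftFunctorCompIsoId C i (-i) (by omega)).app P)) hP
    rw [← Functor.map_eq_zero_iff (shiftFunctor C i),
      ← Preadditive.IsIso.comp_right_eq_zero _ e.hom]
    exact hZ _ hPi _
  exact w.mem_geSet_of_isRetract (.of_iso e.symm) (w.shift_mem_geSet hZi i (i + 1) (by omega))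

variable {Y : ℤ → C} {φ : ∀ i : ℤ, Y (i - 1) ⟶ Y i} {N : ℤ → C}
  {g : ∀ i : ℤ, Y i ⟶ N i} {d : ∀ i : ℤ, N i ⟶ (Y (i - 1))⟦(1 : ℤ)⟧}

lemma tower_mem_leSet {l m : ℤ} (hYl : IsZero (Y l))
    (htri : ∀ i : ℤ, l < i → i ≤ m → Triangle.mk (φ i) (g i) (d i) ∈ distTriang C)
    (hN : ∀ i : ℤ, l < i → i ≤ m → N i ∈ w.leSet i) :
    ∀ i : ℤ, l ≤ i → i ≤ m → Y i ∈ w.leSet i := by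
  intro i hli
  induction i, hli using Int.leInduction with
  | base => exact fun _ => w.mem_leSet_of_isZero hYl l
  | succ n hln ih =>
    intro hnm
    have hY : Y (n + 1 - 1) ∈ w.leSet (n + 1) := by
      rw [add_sub_cancel_right]
      exact w.leSet_monotone (by omega) (ih (by omega))
    exact w.mem_leSet_of_distTriang (htri _ (by omega) hnm) hY (hN _ (by omega) hnm)

variable {i m : ℤ} {π : ∀ j : ℤ, Y j ⟶ Y m} {P : C}

lemma exists_comp_tower_eq (hπm : π m = 𝟙 (Y m)) (hπ : ∀ j : ℤ, φ j ≫ π j = π (j - 1))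
    (htri : ∀ j : ℤ, i < j → j ≤ m → Triangle.mk (φ j) (g j) (d j) ∈ distTriang C)
    (hN : ∀ j : ℤ, i < j → j ≤ m → N j ∈ w.geSet j) (hP : P ∈ w.leSet i) (h : P ⟶ Y m) :
    ∀ j : ℤ, i ≤ j → j ≤ m → ∃ k : P ⟶ Y j, k ≫ π j = h := by
  intro j hij hjm
  induction j, hjm using Int.leInductionDown with
  | base => exact ⟨h, by rw [hπm, comp_id]⟩
  | pred n hnm ih =>
    obtain ⟨k, rfl⟩ := ih (by omega)
    have hk : k ≫ g n = 0 :=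
      w.hom_eq_zero_of_mem_leSet_of_mem_geSet hP (hN n (by omega) hnm) (by omega) _
    obtain ⟨k', rfl⟩ := Triangle.coyoneda_exact₂ _ (htri n (by omega) hnm) k hk
    exact ⟨k', by rw [← hπ n]; exact (assoc _ _ _).symm⟩

lemma eq_zero_of_comp_shift_tower_eq_zero (hπm : π m = 𝟙 (Y m))
    (hπ : ∀ j : ℤ, φ j ≫ π j = π (j - 1))
    (htri : ∀ j : ℤ, i < j → j ≤ m → Triangle.mk (φ j) (g j) (d j) ∈ distTriang C)
    (hN : ∀ j : ℤ, i < j → j ≤ m → N j ∈ w.geSet j) (hP : P ∈ w.leSet i) :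
    ∀ j : ℤ, i ≤ j → j ≤ m →
      ∀ h : P ⟶ (Y j)⟦(1 : ℤ)⟧, h ≫ (π j)⟦(1 : ℤ)⟧' = 0 → h = 0 := by
  intro j hij hjm
  induction j, hjm using Int.leInductionDown with
  | base => simp [hπm]
  | pred n hnm ih =>
    intro h hh
    have hφ : h ≫ (φ n)⟦(1 : ℤ)⟧' = 0 :=
      ih (by omega) _ (by rw [assoc, ← Functor.map_comp, hπ, hh])
    obtain ⟨k, rfl⟩ := Triangle.coyoneda_exact₁ _ (htri n (by omega) hnm) h hφ
    rw [w.hom_eq_zero_of_mem_leSet_of_mem_geSet hP (hN n (by omega) hnm) (by omega) k]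
    exact zero_comp

end WeightStructure

theorem bounded_postnikov_tower_is_weight_tower_general (w : WeightStructure C)
    (l m : ℤ)
    (Y : ℤ → C) (φ : ∀ i : ℤ, Y (i - 1) ⟶ Y i)
    (N : ℤ → C) (g : ∀ i : ℤ, Y i ⟶ N i) (d : ∀ i : ℤ, N i ⟶ (Y (i - 1))⟦(1 : ℤ)⟧)
    (hYl : IsZero (Y l))
    (π : ∀ i : ℤ, Y i ⟶ Y m) (hπm : π m = 𝟙 (Y m))
    (hπ : ∀ i : ℤ, φ i ≫ π i = π (i - 1))
    (htri : ∀ i : ℤ, l < i → i ≤ m → Triangle.mk (φ i) (g i) (d i) ∈ (distTriang C))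
    (hN : ∀ i : ℤ, l < i → i ≤ m → N i ∈ w.eqSet i) :
    ∀ i : ℤ, l < i → i ≤ m →
      Y i ∈ w.leSet i ∧
      (∀ (Z : C) (u : Y m ⟶ Z) (v : Z ⟶ (Y i)⟦(1 : ℤ)⟧),
        Triangle.mk (π i) u v ∈ (distTriang C) → Z ∈ w.geSet (i + 1)) := by
  intro i hli him
  refine ⟨w.tower_mem_leSet hYl htri (fun j hlj hjm => (hN j hlj hjm).1) i hli.le him,
    fun Z u v hZ => w.mem_geSet_of_forall_hom_eq_zero fun P hP f => ?_⟩
  have htri' (j : ℤ) (hij : i < j) (hjm : j ≤ m) := htri j (by omega) hjm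
  have hN' (j : ℤ) (hij : i < j) (hjm : j ≤ m) := (hN j (by omega) hjm).2
  exact hom_obj₃_eq_zero_of_distTriang hZ
    (fun h => w.exists_comp_tower_eq hπm hπ htri' hN' hP h i le_rfl him)
    (w.eq_zero_of_comp_shift_tower_eq_zero hπm hπ htri' hN' hP i le_rfl him) f

/-- Proposition 2.1.3(5): a bounded Postnikov tower
`(0 =) Y_l → Y_{l+1} → ⋯ → Y_m = M` with factors `M_i ∈ C_{w=i}` is a weight Postnikov
tower: `Y_i ∈ C_{w≤i}` and any cone of `Y_i → M` lies in `C_{w≥i+1}`, for `l < i ≤ m`. -/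
theorem bounded_postnikov_tower_is_weight_tower (w : WeightStructure C)
    (l m : ℤ) (hlm : l ≤ m)
    (Y : ℤ → C) (φ : ∀ i : ℤ, Y (i - 1) ⟶ Y i)
    (N : ℤ → C) (g : ∀ i : ℤ, Y i ⟶ N i) (d : ∀ i : ℤ, N i ⟶ (Y (i - 1))⟦(1 : ℤ)⟧)
    (hYl : IsZero (Y l))
    (π : ∀ i : ℤ, Y i ⟶ Y m) (hπm : π m = 𝟙 (Y m))
    (hπ : ∀ i : ℤ, φ i ≫ π i = π (i - 1))
    (htri : ∀ i : ℤ, l < i → i ≤ m → Triangle.mk (φ i) (g i) (d i) ∈ (distTriang C))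
    (hN : ∀ i : ℤ, l < i → i ≤ m → N i ∈ w.eqSet i) :
    ∀ i : ℤ, l < i → i ≤ m →
      Y i ∈ w.leSet i ∧
      (∀ (Z : C) (u : Y m ⟶ Z) (v : Z ⟶ (Y i)⟦(1 : ℤ)⟧),
        Triangle.mk (π i) u v ∈ (distTriang C) → Z ∈ w.geSet (i + 1)) :=
  bounded_postnikov_tower_is_weight_tower_general w l m Y φ N g d hYl π hπm hπ htri hN
end

section
/- Let C be a triangulated category endowed with a weight structure w and let i ∈ ℤ. Then C_{w≥i} is closed with respect to all those small products that exist in C: if (X_j)_{j∈J} is a family of objects of C_{w≥i} whose product exists in C, then ∏_{j∈J} X_j ∈ C_{w≥i}. -/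
open CategoryTheory CategoryTheory.Limits CategoryTheory.Pretriangulated CategoryTheory.Category
open scoped ZeroObject

universe w v u

variable {C : Type u} [Category.{v} C] [Preadditive C] [HasZeroObject C]
  [HasShift C ℤ] [∀ n : ℤ, (shiftFunctor C n).Additive] [Pretriangulated C]

/-! `C_{w≥0}` is the right orthogonal of `C_{w≤0}[-1]`, and right orthogonals are closed under
all products since shifting preserves them. For the converse inclusion, take a weight
decomposition `B → M[1] → A → B[1]`: its first map vanishes by hypothesis, so `M[1]` is a
retract of `A` and `M` a retract of `A[-1] ∈ C_{w≥0}`. -/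

namespace WeightStructure

lemma mem_GE_iff (w : WeightStructure C) {M : C} :
    M ∈ w.GE ↔ ∀ ⦃B : C⦄, B ∈ w.LE → ∀ f : B ⟶ M⟦(1 : ℤ)⟧, f = 0 := by
  refine ⟨fun hM _ hB f => w.orthogonal hB hM f, fun hM => ?_⟩
  obtain ⟨B, A, f, g, h, hB, hA, hT⟩ := w.exists_decomp (M⟦(1 : ℤ)⟧)
  have : Mono g := Triangle.mono₂ _ hT (hM hB f)
  have : IsSplitMono g := isSplitMono_of_mono g
  have hMA : Retract M (A⟦(-1 : ℤ)⟧) :=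
    (shiftShiftNeg M (1 : ℤ)).symm.retract.trans
      ((⟨g, retraction g, IsSplitMono.id g⟩ : Retract _ A).map (shiftFunctor C (-1 : ℤ)))
  exact w.ge_retract ⟨hMA.i, hMA.r, hMA.retract⟩ hA

end WeightStructure

/-- Proposition 2.1.3(7): `C_{w≥i}` is closed with respect to all those small products
that exist in `C`. -/
theorem geSet_closed_under_products (w : WeightStructure C) (i : ℤ)
    {J : Type w} (X : J → C) [HasProduct X]
    (hX : ∀ j : J, X j ∈ w.geSet i) :
    (∏ᶜ X) ∈ w.geSet i := by
  refine w.mem_GE_iff.2 fun B hB f => ?_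
  let F : C ⥤ C := shiftFunctor C (-i) ⋙ shiftFunctor C (1 : ℤ)
  refine (isLimitOfPreserves F (limit.isLimit (Discrete.functor X))).hom_ext fun ⟨j⟩ => ?_
  simpa using w.orthogonal hB (hX j) (f ≫ F.map (Pi.π X j))
end

section
/- Let C be a triangulated category endowed with a weight structure w, let M, M' ∈ C_{w≥0}, and let f : M → M'. Suppose given positive weight Postnikov towers for M and M' (towers (Y_i)_{i≥0} and (Y'_i)_{i≥0} with Y_i ∈ C_{w≤i}, Y'_i ∈ C_{w≤i}, morphisms Y_{i−1} → Y_i and Y_i → M compatible in the obvious sense, with Cone(Y_i → M) ∈ C_{w≥i+1}, and likewise for M', where Y_{−1} = Y'_{−1} = 0), and suppose f extends to a morphism of these towers (a compatible family f_i : Y_i → Y'_i) such that f_0 : Y_0 → Y'_0 is an isomorphism. If moreover M' ∈ C_{w=0}, then M' is a retract of M via f: there exists s : M' → M with f ∘ s = id_{M'}. -/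
/-!
As `M' ∈ C_{w≤0}` and the cone of `Y'₀ → M'` lies in `C_{w≥1}`, orthogonality makes
`M' → Cone` zero, so `Y'₀ → M'` is a split epimorphism. If `t` is a section,
then `t ≫ f₀⁻¹ ≫ (Y₀ → M)` is a section of `f`.
-/

open CategoryTheory CategoryTheory.Limits CategoryTheory.Pretriangulated CategoryTheory.Category
open scoped ZeroObject

universe w v u

variable {C : Type u} [Category.{v} C] [Preadditive C] [HasZeroObject C]
  [HasShift C ℤ] [∀ n : ℤ, (shiftFunctor C n).Additive] [Pretriangulated C]
namespace WeightStructure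

variable (w : WeightStructure C)

lemma hom_eq_zero_of_mem_leSet_of_mem_geSet_s9 {i : ℤ} {X Z : C} (hX : X ∈ w.leSet i)
    (hZ : Z ∈ w.geSet (i + 1)) (g : X ⟶ Z) : g = 0 := by
  let e : Z⟦-i⟧ ≅ (Z⟦-(i + 1)⟧)⟦(1 : ℤ)⟧ := (shiftFunctorAdd' C (-(i + 1)) 1 (-i) (by ring)).app Z
  have hshift : g⟦-i⟧' = 0 := by
    simpa using congrArg (· ≫ e.inv) (w.orthogonal hX hZ (g⟦-i⟧' ≫ e.hom))
  exact (shiftFunctor C (-i)).map_injective (by rw [hshift, Functor.map_zero])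

lemma isSplitEpi_of_distTriang {i : ℤ} {B X Z : C} {p : B ⟶ X} {u : X ⟶ Z}
    {v : Z ⟶ B⟦(1 : ℤ)⟧} (hT : Triangle.mk p u v ∈ distTriang C) (hX : X ∈ w.leSet i)
    (hZ : Z ∈ w.geSet (i + 1)) : IsSplitEpi p := by
  obtain ⟨t, ht⟩ := Triangle.coyoneda_exact₂ _ hT (𝟙 X)
    ((id_comp u).trans (w.hom_eq_zero_of_mem_leSet_of_mem_geSet_s9 hX hZ u))
  exact IsSplitEpi.mk' ⟨t, ht.symm⟩

end WeightStructure

theorem retract_of_morphism_of_positive_towers_general (w : WeightStructure C)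
    (M M' : C) (f : M ⟶ M')
    (Y Y' : ℕ → C)
    (π : ∀ i : ℕ, Y i ⟶ M) (π' : ∀ i : ℕ, Y' i ⟶ M')
    (hcone' : ∀ i : ℕ, ∀ (Z : C) (u : M' ⟶ Z) (v : Z ⟶ (Y' i)⟦(1 : ℤ)⟧),
      Triangle.mk (π' i) u v ∈ (distTriang C) → Z ∈ w.geSet ((i : ℤ) + 1))
    (fi : ∀ i : ℕ, Y i ⟶ Y' i)
    (hfiM : ∀ i : ℕ, fi i ≫ π' i = π i ≫ f)
    (hf0 : IsIso (fi 0))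
    (hM'heart : M' ∈ w.eqSet 0) :
    ∃ s : M' ⟶ M, s ≫ f = 𝟙 M' := by
  obtain ⟨Z, u, v, hT⟩ := distinguished_cocone_triangle (π' 0)
  have := w.isSplitEpi_of_distTriang hT hM'heart.1 (hcone' 0 Z u v hT)
  refine ⟨section_ (π' 0) ≫ inv (fi 0) ≫ π 0, ?_⟩
  rw [assoc, assoc, ← hfiM 0, IsIso.inv_hom_id_assoc, IsSplitEpi.id]

/-- Proposition 2.1.3(11): if `f : M ⟶ M'` (with `M, M' ∈ C_{w≥0}`) extends to a
morphism of positive weight Postnikov towers inducing an isomorphism on the zeroth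
terms, and `M' ∈ C_{w=0}`, then `M'` is a retract of `M` via `f`. -/
theorem retract_of_morphism_of_positive_towers (w : WeightStructure C)
    (M M' : C) (hM : M ∈ w.geSet 0) (hM' : M' ∈ w.geSet 0) (f : M ⟶ M')
    (Y Y' : ℕ → C)
    (φ : ∀ i : ℕ, Y i ⟶ Y (i + 1)) (φ' : ∀ i : ℕ, Y' i ⟶ Y' (i + 1))
    (π : ∀ i : ℕ, Y i ⟶ M) (π' : ∀ i : ℕ, Y' i ⟶ M')
    (hπ : ∀ i : ℕ, φ i ≫ π (i + 1) = π i) (hπ' : ∀ i : ℕ, φ' i ≫ π' (i + 1) = π' i)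
    (hY : ∀ i : ℕ, Y i ∈ w.leSet i) (hY' : ∀ i : ℕ, Y' i ∈ w.leSet i)
    (hcone : ∀ i : ℕ, ∀ (Z : C) (u : M ⟶ Z) (v : Z ⟶ (Y i)⟦(1 : ℤ)⟧),
      Triangle.mk (π i) u v ∈ (distTriang C) → Z ∈ w.geSet ((i : ℤ) + 1))
    (hcone' : ∀ i : ℕ, ∀ (Z : C) (u : M' ⟶ Z) (v : Z ⟶ (Y' i)⟦(1 : ℤ)⟧),
      Triangle.mk (π' i) u v ∈ (distTriang C) → Z ∈ w.geSet ((i : ℤ) + 1))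
    (fi : ∀ i : ℕ, Y i ⟶ Y' i)
    (hfi : ∀ i : ℕ, φ i ≫ fi (i + 1) = fi i ≫ φ' i)
    (hfiM : ∀ i : ℕ, fi i ≫ π' i = π i ≫ f)
    (hf0 : IsIso (fi 0))
    (hM'heart : M' ∈ w.eqSet 0) :
    ∃ s : M' ⟶ M, s ≫ f = 𝟙 M' :=
  retract_of_morphism_of_positive_towers_general w M M' f Y Y' π π' hcone' fi hfiM hf0 hM'heart
end

section
/- Let B be an additive category whose idempotents split (B is idempotent complete). Let N = (⋯ → N^{j−2} → N^{j−1} →^{d^{j−1}} N^j → 0 → ⋯) be a bounded above cochain complex over B that is null-homotopic (i.e., zero in the homotopy category K(B)). Then every differential of N is a split epimorphism onto a direct summand; more precisely, N is isomorphic in the category of complexes C(B) to a direct sum of complexes of the form (Z^p →^{id} Z^p) concentrated in the two consecutive degrees p−1 and p, for suitable objects Z^p of B. -/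
open CategoryTheory CategoryTheory.Limits

universe v u

variable {B : Type u} [Category.{v} B] [Preadditive B] [HasZeroObject B]
  [HasFiniteBiproducts B]

instance : HasBinaryBiproducts B := hasBinaryBiproducts_of_finite_biproducts B

/-- The direct sum, over `p : ℤ`, of the complexes `(Z p → Z p)` (with identity
differential) concentrated in degrees `p - 1` and `p`; in degree `q` it equals
`Z (q+1) ⊞ Z q`. -/
noncomputable def splitComplex (Z : ℤ → B) : CochainComplex B ℤ :=
  CochainComplex.of (fun q => Z (q + 1) ⊞ Z q)
    (fun q => biprod.fst ≫ (biprod.inr : Z (q + 1) ⟶ Z (q + 1 + 1) ⊞ Z (q + 1)))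
    (fun q => by simp)

/-!
A contracting homotopy `h` of `N` gives `𝟙 = d ≫ h + h ≫ d` in every degree, and from this
`d ≫ h ≫ d = d`, so `h ≫ d : N^p → N^p` is an idempotent. Splitting it gives a summand
`Z^p` of `N^p` (the image of `d : N^{p-1} → N^p`), and `d ≫ h` is the complementary
idempotent, whose image is carried isomorphically onto `Z^{p+1}` by `d`. Hence
`N^p ≅ Z^{p+1} ⊞ Z^p`, with `d` becoming the identity `Z^{p+1} → Z^{p+1}`.
-/

namespace Homotopy

variable {C : Type*} [Category* C] [Preadditive C] {N : CochainComplex C ℤ}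
  (H : Homotopy (𝟙 N) 0)

lemma id_eq_d_comp_hom_add_hom_comp_d {p q r : ℤ} (hq : q + 1 = p) (hr : p + 1 = r) :
    𝟙 (N.X p) = N.d p r ≫ H.hom r p + H.hom p q ≫ N.d q p := by
  subst hq hr
  simpa [dNext_eq H.hom (show (ComplexShape.up ℤ).Rel (q + 1) (q + 1 + 1) from rfl),
    prevD_eq H.hom (show (ComplexShape.up ℤ).Rel q (q + 1) from rfl)] using H.comm (q + 1)

lemma d_comp_hom_comp_d {p r : ℤ} (hr : p + 1 = r) :
    N.d p r ≫ H.hom r p ≫ N.d p r = N.d p r := by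
  calc N.d p r ≫ H.hom r p ≫ N.d p r
      = (N.d p r ≫ H.hom r p + H.hom p (p - 1) ≫ N.d (p - 1) p) ≫ N.d p r := by
        simp [Preadditive.add_comp]
    _ = N.d p r := by rw [← H.id_eq_d_comp_hom_add_hom_comp_d (by omega) hr, Category.id_comp]

lemma hom_comp_d_idem {p q : ℤ} (hq : q + 1 = p) :
    (H.hom p q ≫ N.d q p) ≫ H.hom p q ≫ N.d q p = H.hom p q ≫ N.d q p := by
  rw [Category.assoc, H.d_comp_hom_comp_d hq]

structure BoundarySplitting where
  Z : ℤ → C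
  ι : ∀ p, Z p ⟶ N.X p
  π : ∀ p, N.X p ⟶ Z p
  ι_π : ∀ p, ι p ≫ π p = 𝟙 (Z p)
  π_ι : ∀ p, π p ≫ ι p = H.hom p (p - 1) ≫ N.d (p - 1) p

theorem nonempty_boundarySplitting [IsIdempotentComplete C] : Nonempty H.BoundarySplitting := by
  choose Z ι π ι_π π_ι using fun p : ℤ =>
    IsIdempotentComplete.idempotents_split (N.X p) _ (H.hom_comp_d_idem (sub_add_cancel p 1))
  exact ⟨⟨Z, ι, π, ι_π, π_ι⟩⟩

namespace BoundarySplitting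

variable {H} (S : H.BoundarySplitting)

attribute [simp] ι_π

@[simp]
lemma ι_π_assoc (p : ℤ) {X : C} (f : S.Z p ⟶ X) : S.ι p ≫ S.π p ≫ f = f := by
  rw [← Category.assoc, S.ι_π, Category.id_comp]

lemma π_ι' {p q : ℤ} (hq : q + 1 = p) : S.π p ≫ S.ι p = H.hom p q ≫ N.d q p := by
  obtain rfl : q = p - 1 := by omega
  exact S.π_ι p

lemma d_comp_π_comp_ι {p r : ℤ} (hr : p + 1 = r) : N.d p r ≫ S.π r ≫ S.ι r = N.d p r := by
  rw [S.π_ι' hr, H.d_comp_hom_comp_d hr]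

lemma ι_comp_d (p r : ℤ) : S.ι p ≫ N.d p r = 0 := by
  calc S.ι p ≫ N.d p r = S.ι p ≫ (S.π p ≫ S.ι p) ≫ N.d p r := by simp
    _ = 0 := by simp [S.π_ι]

lemma ι_comp_hom_comp_d_comp_π {p r : ℤ} (hr : p + 1 = r) :
    S.ι r ≫ H.hom r p ≫ N.d p r ≫ S.π r = 𝟙 (S.Z r) := by
  calc S.ι r ≫ H.hom r p ≫ N.d p r ≫ S.π r = S.ι r ≫ (S.π r ≫ S.ι r) ≫ S.π r := by
        rw [S.π_ι' hr]; simp only [Category.assoc]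
    _ = 𝟙 (S.Z r) := by simp

-- `π ≫ ι = 𝟙 - d ≫ h`, and `h ≫ d ≫ h = h` on the image of `ι`.
lemma ι_comp_hom_comp_π {p r : ℤ} (hr : p + 1 = r) : S.ι r ≫ H.hom r p ≫ S.π p = 0 := by
  have hπι : S.π p ≫ S.ι p = 𝟙 (N.X p) - N.d p r ≫ H.hom r p := by
    rw [S.π_ι' (sub_add_cancel p 1), H.id_eq_d_comp_hom_add_hom_comp_d (sub_add_cancel p 1) hr]
    abel
  have hhdh : S.ι r ≫ H.hom r p ≫ N.d p r ≫ H.hom r p = S.ι r ≫ H.hom r p := by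
    calc S.ι r ≫ H.hom r p ≫ N.d p r ≫ H.hom r p = S.ι r ≫ (S.π r ≫ S.ι r) ≫ H.hom r p := by
          rw [S.π_ι' hr]; simp only [Category.assoc]
      _ = S.ι r ≫ H.hom r p := by simp
  calc S.ι r ≫ H.hom r p ≫ S.π p = S.ι r ≫ H.hom r p ≫ (S.π p ≫ S.ι p) ≫ S.π p := by simp
    _ = 0 := by
        rw [hπι]; simp [Preadditive.sub_comp, Preadditive.comp_sub, reassoc_of% hhdh]

section Biproducts

variable [HasFiniteBiproducts C]

@[simps]
noncomputable def isoX (p : ℤ) : N.X p ≅ S.Z (p + 1) ⊞ S.Z p where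
  hom := biprod.lift (N.d p (p + 1) ≫ S.π (p + 1)) (S.π p)
  inv := biprod.desc (S.ι (p + 1) ≫ H.hom (p + 1) p) (S.ι p)
  hom_inv_id := by
    rw [biprod.lift_desc, Category.assoc, reassoc_of% (S.d_comp_π_comp_ι rfl), S.π_ι,
      ← H.id_eq_d_comp_hom_add_hom_comp_d (sub_add_cancel p 1) rfl]
  inv_hom_id := by
    ext <;> simp [S.ι_comp_hom_comp_d_comp_π, S.ι_comp_hom_comp_π, reassoc_of% (S.ι_comp_d)]

noncomputable def isoSplitComplex : N ≅ splitComplex S.Z :=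
  HomologicalComplex.Hom.isoOfComponents S.isoX (by
    rintro p _ rfl
    dsimp only [splitComplex]
    rw [CochainComplex.of_d]
    apply biprod.hom_ext <;> simp)

end Biproducts

end BoundarySplitting

end Homotopy

theorem nullhomotopic_bounded_above_splits_general [IsIdempotentComplete B]
    (N : CochainComplex B ℤ)
    (hnull : Nonempty (Homotopy (𝟙 N) 0)) :
    (∀ p : ℤ, ∃ (S : B) (q : N.X p ⟶ S) (i : S ⟶ N.X (p + 1)) (r : N.X (p + 1) ⟶ S)
      (s : S ⟶ N.X p),
      N.d p (p + 1) = q ≫ i ∧ s ≫ q = 𝟙 S ∧ i ≫ r = 𝟙 S) ∧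
    ∃ Z : ℤ → B, Nonempty (N ≅ splitComplex Z) := by
  obtain ⟨H⟩ := hnull
  obtain ⟨S⟩ := H.nonempty_boundarySplitting
  refine ⟨fun p => ⟨S.Z (p + 1), N.d p (p + 1) ≫ S.π (p + 1), S.ι (p + 1), S.π (p + 1),
    S.ι (p + 1) ≫ H.hom (p + 1) p, ?_, ?_, S.ι_π (p + 1)⟩, S.Z, ⟨S.isoSplitComplex⟩⟩
  · rw [Category.assoc, S.d_comp_π_comp_ι rfl]
  · simpa only [Category.assoc] using S.ι_comp_hom_comp_d_comp_π rfl

/-- Every differential of a null-homotopic bounded above complex over an idempotent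
complete additive category is a split epimorphism onto a direct summand; more
precisely, such a complex is isomorphic (in `C(B)`) to a direct sum of complexes of
the form `Z^p = Z^p` concentrated in degrees `p-1`, `p`. -/
theorem nullhomotopic_bounded_above_splits [IsIdempotentComplete B]
    (N : CochainComplex B ℤ) (j : ℤ) (hbound : ∀ p : ℤ, j < p → IsZero (N.X p))
    (hnull : Nonempty (Homotopy (𝟙 N) 0)) :
    (∀ p : ℤ, ∃ (S : B) (q : N.X p ⟶ S) (i : S ⟶ N.X (p + 1)) (r : N.X (p + 1) ⟶ S)
      (s : S ⟶ N.X p),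
      N.d p (p + 1) = q ≫ i ∧ s ≫ q = 𝟙 S ∧ i ≫ r = 𝟙 S) ∧
    ∃ Z : ℤ → B, Nonempty (N ≅ splitComplex Z) :=
  nullhomotopic_bounded_above_splits_general N hnull
end

section
/- Let C be a triangulated category endowed with a weight structure w. Assume that C admits all small products and that the class C_{w≤0} is closed under small products. Then for every j ∈ ℤ the class C_{w=j} is closed under small products, and any small product of weight decompositions is a weight decomposition: if for each index α one has a distinguished triangle B_α → M_α → A_α → B_α[1] with B_α ∈ C_{w≤0} and A_α ∈ C_{w≥0}[1], then the product triangle ∏B_α → ∏M_α → ∏A_α → (∏B_α)[1] is a distinguished triangle with ∏B_α ∈ C_{w≤0} and ∏A_α ∈ C_{w≥0}[1]. -/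
open CategoryTheory CategoryTheory.Limits CategoryTheory.Pretriangulated CategoryTheory.Category
open scoped ZeroObject

universe w v u

variable {C : Type u} [Category.{v} C] [Preadditive C] [HasZeroObject C]
  [HasShift C ℤ] [∀ n : ℤ, (shiftFunctor C n).Additive] [Pretriangulated C]

namespace WeightStructure

variable (w : WeightStructure C)

lemma mem_LE_of_iso {X Y : C} (e : X ≅ Y) (hY : Y ∈ w.LE) : X ∈ w.LE :=
  w.le_retract (.of_iso e) hY

lemma mem_GE_of_iso {X Y : C} (e : X ≅ Y) (hY : Y ∈ w.GE) : X ∈ w.GE :=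
  w.ge_retract (.of_iso e) hY

lemma mem_GE_of_orthogonal {Y : C} (h : ∀ X ∈ w.LE, ∀ f : X ⟶ Y⟦(1 : ℤ)⟧, f = 0) :
    Y ∈ w.GE := by
  obtain ⟨B, A, f, g, d, hB, hA, hT⟩ := w.exists_decomp (Y⟦(1 : ℤ)⟧)
  obtain ⟨r, hr⟩ := Triangle.yoneda_exact₂ _ hT (𝟙 (Y⟦(1 : ℤ)⟧))
    (by rw [Triangle.mk_mor₁, h B hB f]; exact zero_comp)
  have hretract : IsRetract (Y⟦(1 : ℤ)⟧) A := ⟨g, r, hr.symm⟩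
  have hshift : (Y⟦(1 : ℤ)⟧)⟦(-1 : ℤ)⟧ ∈ w.GE :=
    w.ge_retract (hretract.map (shiftFunctor C (-1 : ℤ))) hA
  exact w.mem_GE_of_iso ((shiftFunctorCompIsoId C (1 : ℤ) (-1 : ℤ) (by omega)).symm.app Y) hshift

lemma pi_mem_GE {J : Type*} [HasProductsOfShape J C] (Y : J → C) (hY : ∀ a, Y a ∈ w.GE) :
    ∏ᶜ Y ∈ w.GE := by
  refine w.mem_GE_of_orthogonal fun X hX φ => ?_
  rw [← cancel_mono (PreservesProduct.iso (shiftFunctor C (1 : ℤ)) Y).hom]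
  refine Pi.hom_ext _ _ fun a => ?_
  simpa using w.orthogonal hX (hY a) _

section Products

variable {J : Type*} [HasProductsOfShape J C] (X : J → C)

lemma pi_mem_leSet (hLE : ∀ X : J → C, (∀ a, X a ∈ w.LE) → ∏ᶜ X ∈ w.LE) (i : ℤ)
    (hX : ∀ a, X a ∈ w.leSet i) : ∏ᶜ X ∈ w.leSet i :=
  w.mem_LE_of_iso (PreservesProduct.iso (shiftFunctor C (-i)) X) (hLE _ hX)

lemma pi_mem_geSet (i : ℤ) (hX : ∀ a, X a ∈ w.geSet i) : ∏ᶜ X ∈ w.geSet i :=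
  w.mem_GE_of_iso (PreservesProduct.iso (shiftFunctor C (-i)) X) (w.pi_mem_GE _ hX)

lemma pi_mem_eqSet (hLE : ∀ X : J → C, (∀ a, X a ∈ w.LE) → ∏ᶜ X ∈ w.LE) (i : ℤ)
    (hX : ∀ a, X a ∈ w.eqSet i) : ∏ᶜ X ∈ w.eqSet i :=
  ⟨w.pi_mem_leSet X hLE i fun a => (hX a).1, w.pi_mem_geSet X i fun a => (hX a).2⟩

end Products

end WeightStructure

/-- Proposition 2.1.3(18): if `C` admits all small products and `C_{w≤0}` is closed
under small products, then every `C_{w=j}` is closed under small products, and small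
products of weight decompositions are weight decompositions. -/
theorem products_of_weight_decompositions (w : WeightStructure C)
    [HasProducts.{w} C]
    (hLE : ∀ (J : Type w) (X : J → C), (∀ j, X j ∈ w.LE) → (∏ᶜ X) ∈ w.LE) :
    (∀ (j : ℤ) (J : Type w) (X : J → C), (∀ a, X a ∈ w.eqSet j) → (∏ᶜ X) ∈ w.eqSet j) ∧
    (∀ (J : Type w) (B A M : J → C)
      (f : ∀ a : J, B a ⟶ M a) (g : ∀ a : J, M a ⟶ A a)
      (d : ∀ a : J, A a ⟶ (B a)⟦(1 : ℤ)⟧),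
      (∀ a, B a ∈ w.LE) → (∀ a, (A a)⟦(-1 : ℤ)⟧ ∈ w.GE) →
      (∀ a, Triangle.mk (f a) (g a) (d a) ∈ (distTriang C)) →
      ((∏ᶜ B) ∈ w.LE ∧ (∏ᶜ A)⟦(-1 : ℤ)⟧ ∈ w.GE ∧
        ∃ dd : (∏ᶜ A) ⟶ (∏ᶜ B)⟦(1 : ℤ)⟧,
          (∀ a : J, dd ≫ (shiftFunctor C (1 : ℤ)).map (Limits.Pi.π B a) = Limits.Pi.π A a ≫ d a) ∧
          Triangle.mk (Limits.Pi.map f) (Limits.Pi.map g) dd ∈ (distTriang C))) := by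
  refine ⟨fun j J X hX => w.pi_mem_eqSet X (hLE J) j hX, ?_⟩
  intro J B A M f g d hB hA hT
  let T : J → Triangle C := fun a => Triangle.mk (f a) (g a) (d a)
  exact ⟨hLE J B hB, w.pi_mem_geSet A 1 hA, (productTriangle T).mor₃,
    fun a => (productTriangle.π T a).comm₃, productTriangle_distinguished T hT⟩
end

section
/- Let C be a triangulated category admitting countable products, let (Y_i)_{i≥0} be objects of C with morphisms φ_i : Y_i → Y_{i−1}, and let Y = holim Y_i be their homotopy limit. If A is a cocompact object of C, then the natural map colim_i Hom(Y_i, A) → Hom(Y, A) is bijective. -/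
/-!
Apply `Hom(-, A)` to the triangle `L → ∏ Yᵢ →d ∏ Yᵢ → L⟦1⟧`. Cocompactness identifies
`Hom(∏ Yᵢ, A)` with `⨁ Hom(Yᵢ, A)`, and under this identification precomposition with `d`
becomes `x ↦ (xᵢ - φᵢ₋₁^* xᵢ₋₁)ᵢ`, an injective map whose cokernel is `colimᵢ Hom(Yᵢ, A)`.
Since the shift functor preserves products, the same holds for `d⟦-1⟧`, so the long exact
sequence collapses to `0 → coker(d^*) → Hom(L, A) → 0`.
-/

open CategoryTheory CategoryTheory.Limits CategoryTheory.Pretriangulated CategoryTheory.Category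
open scoped DirectSum

universe v u

/-- An object `A` of a preadditive category is cocompact if for every set-indexed family
`Z` whose product exists, the natural map `⊕ᵢ Hom(Zᵢ, A) → Hom(∏ᵢ Zᵢ, A)` is bijective. -/
def Cocompact {C : Type u} [Category.{v} C] [Preadditive C] (A : C) : Prop :=
  ∀ (I : Type v) [DecidableEq I] (Z : I → C) [HasProduct Z],
    Function.Bijective
      (DirectSum.toAddMonoid (fun i : I =>
        AddMonoidHom.mk' (fun u : Z i ⟶ A => Limits.Pi.π Z i ≫ u)
          (fun _ _ => by simp [Preadditive.comp_add])) :
        (⨁ i : I, (Z i ⟶ A)) →+ ((∏ᶜ Z) ⟶ A))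

namespace DirectSum

variable {M : ℕ → Type*} [∀ i, AddCommGroup (M i)] (ψ : ∀ i, M i →+ M (i + 1))

/-- The cokernel of this map is the colimit of the tower `M 0 → M 1 → ⋯`. -/
def towerDiff : (⨁ i, M i) →+ ⨁ i, M i :=
  toAddMonoid fun i => of M i - (of M (i + 1)).comp (ψ i)

def towerIter (i : ℕ) : ∀ k, M i →+ M (i + k)
  | 0 => AddMonoidHom.id _
  | k + 1 => (ψ (i + k)).comp (towerIter i k)

@[simp]
lemma towerDiff_of (i : ℕ) (v : M i) :
    towerDiff ψ (of M i v) = of M i v - of M (i + 1) (ψ i v) := by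
  simp [towerDiff]

lemma towerDiff_apply_zero (x : ⨁ i, M i) : towerDiff ψ x 0 = x 0 := by
  induction x using DirectSum.induction_on with
  | zero => simp
  | of i v => simp [of_eq_of_ne (i + 1) 0 _ (Nat.succ_ne_zero i).symm]
  | add x y hx hy => simp only [map_add, add_apply, hx, hy]

lemma towerDiff_apply_succ (x : ⨁ i, M i) (j : ℕ) :
    towerDiff ψ x (j + 1) = x (j + 1) - ψ j (x j) := by
  induction x using DirectSum.induction_on with
  | zero => simp
  | of i v =>
    rcases eq_or_ne i j with rfl | hij
    · simp
    · simp [of_eq_of_ne i j _ hij.symm, of_eq_of_ne (i + 1) (j + 1) _ (by omega)]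
  | add x y hx hy =>
    simp only [map_add, add_apply, hx, hy]
    abel

lemma towerDiff_injective : Function.Injective (towerDiff ψ) := by
  refine (injective_iff_map_eq_zero _).2 fun x hx => DFinsupp.ext fun j => ?_
  induction j with
  | zero => simpa [hx] using (towerDiff_apply_zero ψ x).symm
  | succ j ih => simpa [hx, ih, sub_eq_zero] using (towerDiff_apply_succ ψ x j).symm

lemma apply_eq_zero_of_towerDiff_eq_of {x : ⨁ i, M i} {i : ℕ} {v : M i}
    (hx : towerDiff ψ x = of M i v) {j : ℕ} (hj : j < i) : x j = 0 := by
  induction j with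
  | zero => simpa [hx, of_eq_of_ne i 0 _ hj.ne] using (towerDiff_apply_zero ψ x).symm
  | succ j ih =>
    simpa [hx, of_eq_of_ne i (j + 1) _ hj.ne, ih (by omega)] using
      (towerDiff_apply_succ ψ x j).symm

lemma apply_add_eq_towerIter_of_towerDiff_eq_of {x : ⨁ i, M i} {i : ℕ} {v : M i}
    (hx : towerDiff ψ x = of M i v) (k : ℕ) : x (i + k) = towerIter ψ i k v := by
  induction k with
  | zero =>
    cases i with
    | zero => simpa [hx, towerIter] using (towerDiff_apply_zero ψ x).symm
    | succ i =>
      simpa [hx, apply_eq_zero_of_towerDiff_eq_of ψ hx (Nat.lt_succ_self i), towerIter] using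
        (towerDiff_apply_succ ψ x i).symm
  | succ k ih =>
    have := towerDiff_apply_succ ψ x (i + k)
    rw [hx, of_eq_of_ne i (i + k + 1) _ (by omega), ih, eq_comm, sub_eq_zero] at this
    exact this

lemma exists_towerIter_eq_zero_of_towerDiff_eq_of {x : ⨁ i, M i} {i : ℕ} {v : M i}
    (hx : towerDiff ψ x = of M i v) : ∃ k, towerIter ψ i k v = 0 := by
  classical
  obtain ⟨n, hn⟩ := x.support.exists_nat_subset_range
  refine ⟨n, ?_⟩
  rw [← apply_add_eq_towerIter_of_towerDiff_eq_of ψ hx, ← DFinsupp.notMem_support_iff]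
  exact fun h => by simpa using hn h

lemma of_sub_of_towerIter_mem_range (i : ℕ) (v : M i) (k : ℕ) :
    of M i v - of M (i + k) (towerIter ψ i k v) ∈ (towerDiff ψ).range := by
  induction k with
  | zero => simp [towerIter]
  | succ k ih =>
    convert add_mem ih ⟨of M (i + k) (towerIter ψ i k v), rfl⟩ using 1
    simp only [towerDiff_of, towerIter, AddMonoidHom.coe_comp, Function.comp_apply]
    abel

lemma exists_of_sub_of_mem_range_of_le {i N : ℕ} (h : i ≤ N) (v : M i) :
    ∃ w : M N, of M i v - of M N w ∈ (towerDiff ψ).range := by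
  obtain ⟨k, rfl⟩ := Nat.exists_eq_add_of_le h
  exact ⟨_, of_sub_of_towerIter_mem_range ψ i v k⟩

lemma exists_sub_of_mem_range_towerDiff (x : ⨁ i, M i) :
    ∃ N, ∃ w : M N, x - of M N w ∈ (towerDiff ψ).range := by
  induction x using DirectSum.induction_on with
  | zero => exact ⟨0, 0, by simp⟩
  | of i v => exact ⟨i, v, by simp⟩
  | add x y hx hy =>
    obtain ⟨N₁, w₁, h₁⟩ := hx
    obtain ⟨N₂, w₂, h₂⟩ := hy
    obtain ⟨w₁', h₁'⟩ := exists_of_sub_of_mem_range_of_le ψ (le_max_left N₁ N₂) w₁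
    obtain ⟨w₂', h₂'⟩ := exists_of_sub_of_mem_range_of_le ψ (le_max_right N₁ N₂) w₂
    refine ⟨max N₁ N₂, w₁' + w₂', ?_⟩
    convert add_mem (add_mem h₁ h₁') (add_mem h₂ h₂') using 1
    simp only [map_add]
    abel

end DirectSum

section Cocompact

variable {C : Type u} [Category.{v} C] [Preadditive C]

/-- `Cocompact A` says that `piHom Z A` is bijective for every family `Z` indexed by `Type v`. -/
noncomputable def piHom {J : Type*} [DecidableEq J] (Z : J → C) [HasProduct Z] (A : C) :
    (⨁ j, (Z j ⟶ A)) →+ (∏ᶜ Z ⟶ A) :=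
  DirectSum.toAddMonoid fun j => Preadditive.leftComp A (Pi.π Z j)

@[simp]
lemma piHom_of {J : Type*} [DecidableEq J] (Z : J → C) [HasProduct Z] (A : C) (j : J)
    (u : Z j ⟶ A) : piHom Z A (DirectSum.of _ j u) = Pi.π Z j ≫ u := by
  simp [piHom, Preadditive.leftComp]

lemma piHom_equivCongrLeft_ulift {J : Type} [DecidableEq J] (Z : J → C) [HasProduct Z]
    [HasProduct (Z ∘ Equiv.ulift.{v})] (A : C) (x : ⨁ j, (Z j ⟶ A)) :
    piHom (Z ∘ Equiv.ulift.{v}) A (DirectSum.equivCongrLeft Equiv.ulift.symm x) =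
      (Pi.reindex Equiv.ulift Z).hom ≫ piHom Z A x := by
  induction x using DirectSum.induction_on with
  | zero => simp
  | of j u =>
    rw [piHom_of]
    exact (congrArg _ (DirectSum.equivCongrLeft_of (β := fun j => Z j ⟶ A) Equiv.ulift.symm
      (ULift.up j) u)).trans ((piHom_of (Z ∘ Equiv.ulift) A (ULift.up j) u).trans
        (Pi.reindex_hom_π_assoc Equiv.ulift Z (ULift.up j) u).symm)
  | add x y hx hy => simp only [map_add, hx, hy, Preadditive.comp_add]

/-- `Cocompact` only quantifies over index types in `Type v`, so we reindex along `ULift`. -/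
lemma Cocompact.bijective_piHom {A : C} (hA : Cocompact A) {J : Type} [DecidableEq J]
    (Z : J → C) [HasProduct Z] : Function.Bijective (piHom Z A) := by
  have : HasProduct (Z ∘ Equiv.ulift.{v}) :=
    hasProduct_of_equiv_of_iso Z _ Equiv.ulift fun _ => Iso.refl _
  have hZ' : Function.Bijective (piHom (Z ∘ Equiv.ulift.{v}) A) := hA _ _
  have hcomp : ⇑(piHom Z A) = (Pi.reindex Equiv.ulift Z).homFromEquiv ∘
      piHom (Z ∘ Equiv.ulift.{v}) A ∘ DirectSum.equivCongrLeft Equiv.ulift.symm := by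
    ext x
    simp [piHom_equivCongrLeft_ulift]
  rw [hcomp]
  exact (Equiv.bijective _).comp (hZ'.comp (AddEquiv.bijective _))

/-- The morphism `d` of the triangle defining the homotopy limit of the tower `Z`. -/
noncomputable def piTowerDiff (Z : ℕ → C) [HasProduct Z] (ψ : ∀ i, Z (i + 1) ⟶ Z i) :
    ∏ᶜ Z ⟶ ∏ᶜ Z :=
  Pi.lift fun i => Pi.π Z i - Pi.π Z (i + 1) ≫ ψ i

lemma piHom_towerDiff (Z : ℕ → C) [HasProduct Z] (ψ : ∀ i, Z (i + 1) ⟶ Z i) (A : C)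
    (x : ⨁ i, (Z i ⟶ A)) :
    piHom Z A (DirectSum.towerDiff (fun i => Preadditive.leftComp A (ψ i)) x) =
      piTowerDiff Z ψ ≫ piHom Z A x := by
  induction x using DirectSum.induction_on with
  | zero => simp
  | of i u => simp [piTowerDiff, Preadditive.leftComp, Preadditive.sub_comp]
  | add x y hx hy => simp only [map_add, hx, hy, Preadditive.comp_add]

lemma Cocompact.eq_zero_of_piTowerDiff_comp_eq_zero {A : C} (hA : Cocompact A) (Z : ℕ → C)
    [HasProduct Z] (ψ : ∀ i, Z (i + 1) ⟶ Z i) {w : ∏ᶜ Z ⟶ A} (hw : piTowerDiff Z ψ ≫ w = 0) :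
    w = 0 := by
  obtain ⟨x, rfl⟩ := (hA.bijective_piHom Z).2 w
  rw [← piHom_towerDiff] at hw
  rw [(DirectSum.towerDiff_injective _).eq_iff' (map_zero _) |>.1
    ((hA.bijective_piHom Z).1.eq_iff' (map_zero _) |>.1 hw), map_zero]

lemma map_piTowerDiff_comp_piComparison {D : Type*} [Category D] [Preadditive D] (F : C ⥤ D)
    [F.Additive] (Z : ℕ → C) [HasProduct Z] [HasProduct fun i => F.obj (Z i)]
    (ψ : ∀ i, Z (i + 1) ⟶ Z i) :
    F.map (piTowerDiff Z ψ) ≫ piComparison F Z =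
      piComparison F Z ≫ piTowerDiff (fun i => F.obj (Z i)) (fun i => F.map (ψ i)) := by
  refine Pi.hom_ext _ _ fun i => ?_
  simp only [piTowerDiff, assoc, piComparison_comp_π, limit.lift_π, Fan.mk_pt, Fan.mk_π_app,
    Preadditive.comp_sub, piComparison_comp_π_assoc, ← F.map_comp, F.map_sub]

lemma Cocompact.eq_zero_of_map_piTowerDiff_comp_eq_zero {A : C} (hA : Cocompact A)
    {D : Type*} [Category D] [Preadditive D] (F : D ⥤ C) [F.Additive] (Z : ℕ → D)
    [HasProduct Z] [PreservesLimit (Discrete.functor Z) F] (ψ : ∀ i, Z (i + 1) ⟶ Z i)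
    {w : F.obj (∏ᶜ Z) ⟶ A} (hw : F.map (piTowerDiff Z ψ) ≫ w = 0) : w = 0 := by
  have : HasProduct fun i => F.obj (Z i) :=
    HasLimit.mk ⟨_, isLimitOfHasProductOfPreservesLimit F Z⟩
  have h : piTowerDiff (fun i => F.obj (Z i)) (fun i => F.map (ψ i)) ≫
      inv (piComparison F Z) ≫ w = 0 := by
    rw [← IsIso.inv_hom_id_assoc (piComparison F Z) (piTowerDiff _ _),
      ← map_piTowerDiff_comp_piComparison, assoc, assoc, IsIso.hom_inv_id_assoc, hw,
      comp_zero]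
  simpa using hA.eq_zero_of_piTowerDiff_comp_eq_zero _ _ h

end Cocompact

variable {C : Type u} [Category.{v} C] [Preadditive C] [HasZeroObject C]
  [HasShift C ℤ] [∀ n : ℤ, (shiftFunctor C n).Additive] [Pretriangulated C]

/-- The transition morphisms `Y (i+k) ⟶ Y i` of a tower. -/
def towerTransition (Y : ℕ → C) (φ : ∀ i : ℕ, Y (i + 1) ⟶ Y i) :
    ∀ (i k : ℕ), Y (i + k) ⟶ Y i
  | _, 0 => 𝟙 _
  | i, (k + 1) => φ (i + k) ≫ towerTransition Y φ i k

lemma DirectSum.towerIter_leftComp {D : Type*} [Category D] [Preadditive D] (Y : ℕ → D)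
    (φ : ∀ i, Y (i + 1) ⟶ Y i) (A : D) (i k : ℕ) (u : Y i ⟶ A) :
    towerIter (fun i => Preadditive.leftComp A (φ i)) i k u = towerTransition Y φ i k ≫ u := by
  induction k with
  | zero => simp [towerIter, towerTransition]
  | succ k ih =>
    simp only [towerIter, AddMonoidHom.coe_comp, Function.comp_apply, ih]
    simp [towerTransition, Preadditive.leftComp]

lemma Cocompact.exists_eq_comp_of_distTriang {A : C} (hA : Cocompact A) {Y : ℕ → C}
    [HasProduct Y] (φ : ∀ i, Y (i + 1) ⟶ Y i) {L : C} {g : L ⟶ ∏ᶜ Y} {h : ∏ᶜ Y ⟶ L⟦(1 : ℤ)⟧}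
    (htri : Triangle.mk g (piTowerDiff Y φ) h ∈ distTriang C) (f : L ⟶ A) :
    ∃ w, f = g ≫ w := by
  have hw : (shiftFunctor C (-1 : ℤ)).map h ≫ (shiftEquiv C (1 : ℤ)).unitIso.inv.app L ≫ f = 0 :=
    hA.eq_zero_of_map_piTowerDiff_comp_eq_zero (shiftFunctor C (-1 : ℤ)) Y φ (by
      have hdh : piTowerDiff Y φ ≫ h = 0 := comp_distTriang_mor_zero₂₃ _ htri
      rw [← Functor.map_comp_assoc, hdh, Functor.map_zero, zero_comp])
  refine Triangle.yoneda_exact₂ _ (inv_rot_of_distTriang _ htri) f ?_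
  change (-(_ ≫ _)) ≫ f = 0
  rw [Preadditive.neg_comp, neg_eq_zero]
  exact (assoc _ _ _).trans hw

/-- Lemma 2.2.3(3): if `A` is cocompact, then for any homotopy limit `L` of a sequence
`(Y_i, φ_i)` the natural map `colimᵢ Hom(Y_i, A) → Hom(L, A)` is bijective. -/
theorem colim_hom_from_holim_bijective
    (Y : ℕ → C) [HasProduct Y] (φ : ∀ i : ℕ, Y (i + 1) ⟶ Y i)
    (L : C) (g : L ⟶ ∏ᶜ Y) (h : ∏ᶜ Y ⟶ L⟦(1 : ℤ)⟧)
    (htri : Triangle.mk g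
      (Limits.Pi.lift (fun i : ℕ => Limits.Pi.π Y i - Limits.Pi.π Y (i + 1) ≫ φ i)) h ∈
      (distTriang C))
    (A : C) (hA : Cocompact A) :
    (∀ f : L ⟶ A, ∃ (i : ℕ) (u : Y i ⟶ A), (g ≫ Limits.Pi.π Y i) ≫ u = f) ∧
    (∀ (i : ℕ) (u u' : Y i ⟶ A),
      (g ≫ Limits.Pi.π Y i) ≫ u = (g ≫ Limits.Pi.π Y i) ≫ u' →
      ∃ k : ℕ, towerTransition Y φ i k ≫ u = towerTransition Y φ i k ≫ u') := by
  let ψ := fun i => Preadditive.leftComp A (φ i)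
  have hgd : g ≫ piTowerDiff Y φ = 0 := comp_distTriang_mor_zero₁₂ _ htri
  have hbij := hA.bijective_piHom Y
  refine ⟨fun f => ?_, fun i u u' huu => ?_⟩
  · obtain ⟨w, rfl⟩ := hA.exists_eq_comp_of_distTriang φ htri f
    obtain ⟨x, rfl⟩ := hbij.2 w
    obtain ⟨N, v, y, hy⟩ := DirectSum.exists_sub_of_mem_range_towerDiff ψ x
    refine ⟨N, v, ?_⟩
    rw [eq_add_of_sub_eq hy.symm, map_add, Preadditive.comp_add, piHom_towerDiff,
      reassoc_of% hgd, zero_comp, zero_add, piHom_of, assoc]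
  · have hvanish : g ≫ Pi.π Y i ≫ (u - u') = 0 := by
      simpa [Preadditive.comp_sub, sub_eq_zero] using huu
    obtain ⟨w, hw⟩ := Triangle.yoneda_exact₂ _ htri _ hvanish
    obtain ⟨x, rfl⟩ := hbij.2 w
    have hx : DirectSum.towerDiff ψ x = DirectSum.of _ i (u - u') :=
      hbij.1 (by rw [piHom_towerDiff, piHom_of]; exact hw.symm)
    obtain ⟨k, hk⟩ := DirectSum.exists_towerIter_eq_zero_of_towerDiff_eq_of ψ hx
    refine ⟨k, ?_⟩
    rwa [DirectSum.towerIter_leftComp, Preadditive.comp_sub, sub_eq_zero] at hk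
end

section
/- Let C be a triangulated category closed under all small products, and let D and C' be classes of objects of C with D ⊥ C' (i.e., Hom(X, Y) = 0 for all X ∈ D and Y ∈ C'). Then D ⊥ C'' where C'' is the coenvelope of C': Hom(X, Y) = 0 for all X ∈ D and all Y in the coenvelope of C'. -/
/-!
Induct on the coenvelope; products are handled by their universal property. For a homotopy
limit `L → ∏ Y_i → ∏ Y_i` the triangles `Cone(φ_i)[-1] → Y_{i+1} → Y_i` first give
`Hom(X, Y_i) = 0` by induction on `i`, and then make every `Hom(X, Y_{i+1}[-1]) → Hom(X, Y_i[-1])`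
surjective. This Mittag-Leffler condition kills `lim¹`, so every map `X → (∏ Y_i)[-1]` lifts
through `d[-1]`. Since `Hom(X, ∏ Y_i) = 0`, a map `X → L` factors through `(∏ Y_i)[-1] → L`,
hence through `d[-1]` followed by that map: two consecutive maps of a distinguished triangle.
-/

open CategoryTheory CategoryTheory.Limits CategoryTheory.Pretriangulated CategoryTheory.Category

universe v u

variable (C : Type u) [Category.{v} C] [Preadditive C] [HasZeroObject C]
  [HasShift C ℤ] [∀ n : ℤ, (shiftFunctor C n).Additive] [Pretriangulated C]

variable {C} in
/-- The coenvelope of a class `S` of objects: the smallest class containing `S` and `0`,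
closed under all small products, and containing all homotopy limits `holim Y_i` of
sequences `φ_i : Y_{i+1} ⟶ Y_i` with `Y_0` in the class and (a choice of)
`Cone(φ_i)[-1]` in the class for every `i`. -/
inductive Coenvelope (S : Set C) : C → Prop
  | base (X : C) (hX : X ∈ S) : Coenvelope S X
  | zero (X : C) (hX : IsZero X) : Coenvelope S X
  | prod {I : Type v} (Z : I → C) [HasProduct Z]
      (hZ : ∀ i : I, Coenvelope S (Z i)) : Coenvelope S (∏ᶜ Z)
  | holim (Y : ℕ → C) [HasProduct Y] (φ : ∀ i : ℕ, Y (i + 1) ⟶ Y i)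
      (L : C) (g : L ⟶ ∏ᶜ Y) (h : ∏ᶜ Y ⟶ L⟦(1 : ℤ)⟧)
      (htri : Triangle.mk g
        (Limits.Pi.lift (fun i : ℕ => Limits.Pi.π Y i - Limits.Pi.π Y (i + 1) ≫ φ i)) h ∈
        (distTriang C))
      (Z : ℕ → C) (u : ∀ i : ℕ, Y i ⟶ Z i) (v : ∀ i : ℕ, Z i ⟶ (Y (i + 1))⟦(1 : ℤ)⟧)
      (hcone : ∀ i : ℕ, Triangle.mk (φ i) (u i) (v i) ∈ (distTriang C))
      (hY0 : Coenvelope S (Y 0))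
      (hZ : ∀ i : ℕ, Coenvelope S ((Z i)⟦(-1 : ℤ)⟧)) : Coenvelope S L

variable {C}

section Preadditive

variable {C : Type*} [Category C] [Preadditive C]

lemma hom_to_pi_eq_zero {I : Type*} {Z : I → C} [HasProduct Z] {X : C}
    (hZ : ∀ i, ∀ f : X ⟶ Z i, f = 0) (f : X ⟶ ∏ᶜ Z) : f = 0 :=
  Pi.hom_ext f 0 fun i => by rw [zero_comp]; exact hZ i _

lemma exists_comp_eq_of_surjective_tower {W : ℕ → C} (ψ : ∀ i, W (i + 1) ⟶ W i)
    {P : C} (p : ∀ i, P ⟶ W i) (hP : IsLimit (Fan.mk P p)) (δ : P ⟶ P)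
    (hδ : ∀ i, δ ≫ p i = p i - p (i + 1) ≫ ψ i) {X : C}
    (hψ : ∀ i, ∀ b : X ⟶ W i, ∃ a : X ⟶ W (i + 1), a ≫ ψ i = b) (f : X ⟶ P) :
    ∃ A : X ⟶ P, A ≫ δ = f := by
  choose s hs using hψ
  let a : ∀ i, X ⟶ W i := fun i => Nat.rec 0 (fun j aj => s j (aj - f ≫ p j)) i
  have ha : ∀ i, a (i + 1) ≫ ψ i = a i - f ≫ p i := fun i => hs i _
  have hA : ∀ i, hP.lift (Fan.mk X a) ≫ p i = a i := fun i => hP.fac (Fan.mk X a) ⟨i⟩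
  refine ⟨hP.lift (Fan.mk X a), hP.hom_ext fun ⟨i⟩ => ?_⟩
  dsimp
  rw [assoc, hδ, Preadditive.comp_sub, ← assoc, hA, hA, ha]
  abel

end Preadditive

section Triangulated

variable {T : Triangle C} {X : C}

lemma Triangle.hom_obj₂_eq_zero (hT : T ∈ distTriang C) (h₁ : ∀ f : X ⟶ T.obj₁, f = 0)
    (h₃ : ∀ f : X ⟶ T.obj₃, f = 0) (f : X ⟶ T.obj₂) : f = 0 := by
  obtain ⟨g, rfl⟩ := Triangle.coyoneda_exact₂ T hT f (h₃ _)
  rw [h₁ g, zero_comp]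

lemma Triangle.exists_comp_shift_mor₁_eq (hT : T ∈ distTriang C) (n : ℤ)
    (h₃ : ∀ f : X ⟶ T.obj₃⟦n⟧, f = 0) (b : X ⟶ T.obj₂⟦n⟧) :
    ∃ a : X ⟶ T.obj₁⟦n⟧, a ≫ T.mor₁⟦n⟧' = b := by
  obtain ⟨a, ha⟩ : ∃ a : X ⟶ T.obj₁⟦n⟧,
      b = a ≫ (n.negOnePow • T.mor₁⟦n⟧' : T.obj₁⟦n⟧ ⟶ T.obj₂⟦n⟧) :=
    Triangle.coyoneda_exact₂ _ (Triangle.shift_distinguished T hT n) b (h₃ _)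
  exact ⟨n.negOnePow • a, by simp [ha]⟩

lemma Triangle.hom_obj₁_eq_zero (hT : T ∈ distTriang C) (h₂ : ∀ f : X ⟶ T.obj₂, f = 0)
    (h : ∀ f : X ⟶ T.obj₃⟦(-1 : ℤ)⟧, ∃ a : X ⟶ T.obj₂⟦(-1 : ℤ)⟧, a ≫ T.mor₂⟦(-1 : ℤ)⟧' = f)
    (f : X ⟶ T.obj₁) : f = 0 := by
  let δ : T.obj₃⟦(-1 : ℤ)⟧ ⟶ T.obj₁ := T.invRotate.mor₁
  obtain ⟨f', rfl⟩ : ∃ f', f = f' ≫ δ :=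
    Triangle.coyoneda_exact₂ _ (inv_rot_of_distTriang T hT) f (h₂ _)
  obtain ⟨a, rfl⟩ := h f'
  have hδ : T.mor₂⟦(-1 : ℤ)⟧' ≫ δ = 0 := by
    simp [δ, ← Functor.map_comp_assoc, comp_distTriang_mor_zero₂₃ T hT]
  rw [assoc, hδ, comp_zero]

end Triangulated

theorem orthogonal_to_coenvelope_general
    (D S : Set C) (hDS : ∀ X ∈ D, ∀ Y ∈ S, ∀ f : X ⟶ Y, f = 0) :
    ∀ X ∈ D, ∀ Y : C, Coenvelope S Y → ∀ f : X ⟶ Y, f = 0 := by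
  intro X hX Y hY
  induction hY with
  | base W hW => exact hDS X hX W hW
  | zero W hW => exact fun f => hW.eq_of_tgt f 0
  | prod Z _ ih => exact hom_to_pi_eq_zero ih
  | holim Y φ L g h htri Z u v hcone _ _ ihY0 ihZ =>
    have hY : ∀ i, ∀ f : X ⟶ Y i, f = 0 := fun i => Nat.rec ihY0
      (fun i ih => Triangle.hom_obj₂_eq_zero (inv_rot_of_distTriang _ (hcone i)) (ihZ i) ih) i
    have hd : ∀ i, (Pi.lift fun i => Pi.π Y i - Pi.π Y (i + 1) ≫ φ i)⟦(-1 : ℤ)⟧' ≫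
        (Pi.π Y i)⟦(-1 : ℤ)⟧' =
          (Pi.π Y i)⟦(-1 : ℤ)⟧' - (Pi.π Y (i + 1))⟦(-1 : ℤ)⟧' ≫ (φ i)⟦(-1 : ℤ)⟧' :=
      fun i => by rw [← Functor.map_comp, Pi.lift_π, Functor.map_sub, Functor.map_comp]
    refine Triangle.hom_obj₁_eq_zero htri (hom_to_pi_eq_zero hY) ?_
    exact exists_comp_eq_of_surjective_tower _ _
      (isLimitFanMkObjOfIsLimit (shiftFunctor C (-1 : ℤ)) Y (Pi.π Y) (productIsProduct Y)) _ hd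
      (fun i => Triangle.exists_comp_shift_mor₁_eq (hcone i) (-1) (ihZ i))

/-- Lemma 2.2.5: if `D ⊥ S`, then `D` is also left-orthogonal to the coenvelope of `S`. -/
theorem orthogonal_to_coenvelope [HasProducts.{v} C]
    (D S : Set C) (hDS : ∀ X ∈ D, ∀ Y ∈ S, ∀ f : X ⟶ Y, f = 0) :
    ∀ X ∈ D, ∀ Y : C, Coenvelope S Y → ∀ f : X ⟶ Y, f = 0 :=
  orthogonal_to_coenvelope_general D S hDS
end
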